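/- For |q|<1, the function W₁(q) := ∑_{n≥0} (−1)^n (q;q)_n q^{n(n+1)/2}/(−q;q)_n satisfies the identity ∑_{n≥1} q^{n(n−1)}/((1+q^{2n−1})·(−q²;q²)_{n−1}) = W₁(q). -/

import Mathlib

/-!
Both sides are expansions of one value of Fine's function
`F(a, b; t) = ∑ₙ (a;Q)ₙ tⁿ / (b;Q)ₙ` with `Q = q²`, namely `F(q, -q²; -q)`. Fine's three-term
relations give first-order recurrences `xₖ = cₖ + yₖ xₖ₊₁` for the two families
`vₖ = F(q, -q^(2k+2); -q^(2k+1))` and `wₖ = F(q^(2k+1), -q^(2k+2); -q^(2k+1))`, which agree at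
`k = 0`. Since `yₖ → 0` and `xₖ` stays bounded, iterating gives `x₀ = ∑ₖ (∏_{j<k} yⱼ) cₖ`: for `v`
this is the left-hand side, for `w` it is `W₁(q)` with consecutive terms paired.
-/

open scoped BigOperators

/-- The finite q-Pochhammer symbol `(a;q)_n = ∏_{j=0}^{n-1} (1 - a q^j)`. -/
noncomputable def qPoch (a q : ℂ) (n : ℕ) : ℂ := ∏ j ∈ Finset.range n, (1 - a * q ^ j)

open Filter Finset Topology

section Recurrence

variable {R : Type*} [NormedCommRing R]

theorem summable_norm_of_succ_eq_mul {f r : ℕ → R} {ρ : R} (hf : ∀ n, f (n + 1) = f n * r n)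
    (hr : Tendsto r atTop (𝓝 ρ)) (hρ : ‖ρ‖ < 1) : Summable (fun n => ‖f n‖) := by
  obtain ⟨s, hρs, hs1⟩ := exists_between hρ
  refine summable_of_ratio_norm_eventually_le hs1 ?_
  filter_upwards [hr.norm.eventually_le_const hρs] with n hn
  simp only [norm_norm, hf n]
  calc ‖f n * r n‖ ≤ ‖f n‖ * ‖r n‖ := norm_mul_le _ _
    _ ≤ s * ‖f n‖ := by rw [mul_comm]; gcongr

theorem eq_sum_add_prod_mul_of_recurrence {x c y : ℕ → R} (hrec : ∀ k, x k = c k + y k * x (k + 1))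
    (N : ℕ) : x 0 = ∑ k ∈ range N, (∏ j ∈ range k, y j) * c k + (∏ j ∈ range N, y j) * x N := by
  induction N with
  | zero => simp
  | succ N ih => rw [ih, hrec N, sum_range_succ, prod_range_succ]; ring

variable [CompleteSpace R]

theorem hasSum_prod_mul_of_recurrence {x c y : ℕ → R} {M : ℝ}
    (hrec : ∀ k, x k = c k + y k * x (k + 1)) (hy : Tendsto y atTop (𝓝 0))
    (hx : ∀ᶠ N in atTop, ‖x N‖ ≤ M) :
    HasSum (fun k => (∏ j ∈ range k, y j) * c k) (x 0) := by
  have hP : Summable (fun N => ‖∏ j ∈ range N, y j‖) :=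
    summable_norm_of_succ_eq_mul (fun N => prod_range_succ y N) hy (by simp)
  have hc : ∀ᶠ k in atTop, ‖c k‖ ≤ 2 * M := by
    filter_upwards [hx, (tendsto_add_atTop_nat 1).eventually hx,
      hy.norm.eventually_le_const (by simp : ‖(0 : R)‖ < 1)] with k hxk hxk' hyk
    have hM : 0 ≤ M := (norm_nonneg _).trans hxk
    calc ‖c k‖ = ‖x k - y k * x (k + 1)‖ := by rw [hrec k, add_sub_cancel_right]
      _ ≤ ‖x k‖ + ‖y k‖ * ‖x (k + 1)‖ := (norm_sub_le _ _).trans (by gcongr; exact norm_mul_le _ _)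
      _ ≤ M + 1 * M := by gcongr
      _ = 2 * M := by ring
  have hsum : Summable (fun k => (∏ j ∈ range k, y j) * c k) := by
    refine .of_norm_bounded_eventually_nat (hP.mul_right (2 * M)) ?_
    filter_upwards [hc] with k hk
    exact (norm_mul_le _ _).trans (by gcongr)
  have hrem : Tendsto (fun N => (∏ j ∈ range N, y j) * x N) atTop (𝓝 0) := by
    refine squeeze_zero_norm' ?_ (by simpa using hP.tendsto_atTop_zero.mul_const M)
    filter_upwards [hx] with N hN
    exact (norm_mul_le _ _).trans (by gcongr)
  have hlim : Tendsto (fun N => x 0 - (∏ j ∈ range N, y j) * x N) atTop (𝓝 (x 0)) := by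
    simpa using tendsto_const_nhds.sub hrem
  rw [hsum.hasSum_iff_tendsto_nat]
  refine hlim.congr fun N => ?_
  rw [eq_sum_add_prod_mul_of_recurrence hrec N, add_sub_cancel_right]

end Recurrence

theorem one_sub_sum_le_prod_one_sub {ι : Type*} (s : Finset ι) {x : ι → ℝ} (h0 : ∀ i ∈ s, 0 ≤ x i)
    (h1 : ∀ i ∈ s, x i ≤ 1) : 1 - ∑ i ∈ s, x i ≤ ∏ i ∈ s, (1 - x i) := by
  induction s using Finset.cons_induction with
  | empty => simp
  | cons i s hi ih =>
    simp only [forall_mem_cons] at h0 h1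
    rw [sum_cons, prod_cons]
    have hp : 0 ≤ ∏ j ∈ s, (1 - x j) := prod_nonneg fun j hj => by linarith [h1.2 j hj]
    have hs : 0 ≤ ∑ j ∈ s, x j := sum_nonneg h0.2
    nlinarith [ih h0.2 h1.2]

section QPochhammer

variable {a Q : ℂ}

theorem qPoch_zero (a Q : ℂ) : qPoch a Q 0 = 1 := prod_range_zero _

theorem qPoch_succ (a Q : ℂ) (n : ℕ) : qPoch a Q (n + 1) = qPoch a Q n * (1 - a * Q ^ n) :=
  prod_range_succ _ _

theorem qPoch_succ' (a Q : ℂ) (n : ℕ) : qPoch a Q (n + 1) = (1 - a) * qPoch (a * Q) Q n := by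
  simp only [qPoch, prod_range_succ', pow_zero, mul_one, pow_succ', mul_assoc, mul_comm (1 - a)]

theorem norm_mul_pow_lt_one (ha : ‖a‖ < 1) (hQ : ‖Q‖ ≤ 1) (n : ℕ) : ‖a * Q ^ n‖ < 1 := by
  rw [norm_mul, norm_pow]
  exact (mul_le_of_le_one_right (norm_nonneg a) (pow_le_one₀ (norm_nonneg Q) hQ)).trans_lt ha

theorem one_sub_mul_pow_ne_zero (ha : ‖a‖ < 1) (hQ : ‖Q‖ ≤ 1) (n : ℕ) : 1 - a * Q ^ n ≠ 0 :=
  sub_ne_zero.2 fun h => by simpa [← h] using norm_mul_pow_lt_one ha hQ n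

theorem qPoch_ne_zero (ha : ‖a‖ < 1) (hQ : ‖Q‖ ≤ 1) (n : ℕ) : qPoch a Q n ≠ 0 :=
  prod_ne_zero_iff.2 fun j _ => one_sub_mul_pow_ne_zero ha hQ j

theorem sum_norm_mul_pow_le (hQ : ‖Q‖ < 1) (n : ℕ) :
    ∑ j ∈ range n, ‖a‖ * ‖Q‖ ^ j ≤ ‖a‖ / (1 - ‖Q‖) := by
  rw [← mul_sum, ← mul_one_div, range_eq_Ico]
  exact mul_le_mul_of_nonneg_left
    (by simpa using geom_sum_Ico_le_of_lt_one (m := 0) (n := n) (norm_nonneg Q) hQ) (norm_nonneg a)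

theorem norm_qPoch_le (hQ : ‖Q‖ < 1) (n : ℕ) : ‖qPoch a Q n‖ ≤ Real.exp (‖a‖ / (1 - ‖Q‖)) := by
  calc ‖qPoch a Q n‖ ≤ ∏ j ∈ range n, Real.exp (‖a‖ * ‖Q‖ ^ j) := by
        rw [qPoch, norm_prod]
        refine prod_le_prod (fun _ _ => norm_nonneg _) fun j _ => ?_
        calc ‖1 - a * Q ^ j‖ ≤ 1 + ‖a‖ * ‖Q‖ ^ j := by
              simpa [norm_mul, norm_pow] using norm_sub_le (1 : ℂ) (a * Q ^ j)
          _ ≤ _ := by linarith [Real.add_one_le_exp (‖a‖ * ‖Q‖ ^ j)]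
    _ = Real.exp (∑ j ∈ range n, ‖a‖ * ‖Q‖ ^ j) := (Real.exp_sum _ _).symm
    _ ≤ Real.exp (‖a‖ / (1 - ‖Q‖)) := Real.exp_le_exp.2 (sum_norm_mul_pow_le hQ n)

theorem one_sub_div_le_norm_qPoch (ha : ‖a‖ ≤ 1) (hQ : ‖Q‖ < 1) (n : ℕ) :
    1 - ‖a‖ / (1 - ‖Q‖) ≤ ‖qPoch a Q n‖ := by
  have hle : ∀ j ∈ range n, ‖a‖ * ‖Q‖ ^ j ≤ 1 := fun j _ =>
    mul_le_one₀ ha (by positivity) (pow_le_one₀ (norm_nonneg Q) hQ.le)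
  calc 1 - ‖a‖ / (1 - ‖Q‖) ≤ 1 - ∑ j ∈ range n, ‖a‖ * ‖Q‖ ^ j := by
        linarith [sum_norm_mul_pow_le (a := a) hQ n]
    _ ≤ ∏ j ∈ range n, (1 - ‖a‖ * ‖Q‖ ^ j) :=
        one_sub_sum_le_prod_one_sub _ (fun j _ => by positivity) hle
    _ ≤ ‖qPoch a Q n‖ := by
        rw [qPoch, norm_prod]
        refine prod_le_prod (fun j hj => by linarith [hle j hj]) fun j _ => ?_
        simpa [norm_mul, norm_pow] using norm_sub_norm_le (1 : ℂ) (a * Q ^ j)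

end QPochhammer

section Fine

variable {Q a b c t : ℂ}

noncomputable def fineFTerm (Q a b t : ℂ) (n : ℕ) : ℂ := qPoch a Q n * t ^ n / qPoch b Q n

noncomputable def fineF (Q a b t : ℂ) : ℂ := ∑' n, fineFTerm Q a b t n

theorem fineFTerm_zero : fineFTerm Q a b t 0 = 1 := by simp [fineFTerm, qPoch_zero]

theorem fineFTerm_succ (n : ℕ) :
    fineFTerm Q a b t (n + 1) = fineFTerm Q a b t n * ((1 - a * Q ^ n) * t / (1 - b * Q ^ n)) := by
  rw [fineFTerm, fineFTerm, qPoch_succ, qPoch_succ, pow_succ, div_mul_div_comm]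
  ring

theorem summable_fineFTerm (hQ : ‖Q‖ < 1) (ht : ‖t‖ < 1) : Summable (fineFTerm Q a b t) := by
  have hQn := tendsto_pow_atTop_nhds_zero_of_norm_lt_one hQ
  have hr : Tendsto (fun n => (1 - a * Q ^ n) * t / (1 - b * Q ^ n)) atTop (𝓝 t) := by
    simpa [Pi.div_def] using (((hQn.const_mul a).const_sub 1).mul_const t).div
      ((hQn.const_mul b).const_sub 1) (by simp)
  exact .of_norm (summable_norm_of_succ_eq_mul fineFTerm_succ hr ht)

theorem fineF_shift_ab (hQ : ‖Q‖ < 1) (ht : ‖t‖ < 1) (hb : b ≠ 1) :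
    (1 - b) * fineF Q a b t = (1 - b) + t * (1 - a) * fineF Q (a * Q) (b * Q) t := by
  have hterm (n : ℕ) :
      (1 - b) * fineFTerm Q a b t (n + 1) = t * (1 - a) * fineFTerm Q (a * Q) (b * Q) t n := by
    have hb' : 1 - b ≠ 0 := sub_ne_zero.2 hb.symm
    rw [fineFTerm, fineFTerm, qPoch_succ', qPoch_succ', pow_succ']
    field_simp
  rw [fineF, fineF, (summable_fineFTerm hQ ht).tsum_eq_zero_add, fineFTerm_zero, mul_add, mul_one,
    ← tsum_mul_left, ← tsum_mul_left]
  simp_rw [hterm]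

theorem fineF_split (hQ : ‖Q‖ < 1) (ht : ‖t‖ < 1) (hb : ‖b‖ < 1) :
    (1 - b) * fineF Q a b t = fineF Q a (b * Q) t - b * fineF Q a (b * Q) (t * Q) := by
  have htQ : ‖t * Q‖ < 1 := by simpa using norm_mul_pow_lt_one ht hQ.le 1
  have hterm (n : ℕ) : (1 - b) * fineFTerm Q a b t n
      = fineFTerm Q a (b * Q) t n - b * fineFTerm Q a (b * Q) (t * Q) n := by
    have hrel : qPoch b Q n * (1 - b * Q ^ n) = (1 - b) * qPoch (b * Q) Q n := by
      rw [← qPoch_succ, qPoch_succ']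
    have h1 := qPoch_ne_zero hb hQ.le n
    have h2 := qPoch_ne_zero (a := b * Q) (by simpa using norm_mul_pow_lt_one hb hQ.le 1) hQ.le n
    rw [fineFTerm, fineFTerm, fineFTerm, mul_pow]
    field_simp
    linear_combination -qPoch a Q n * t ^ n * hrel
  rw [fineF, ← tsum_mul_left, tsum_congr hterm,
    (summable_fineFTerm hQ ht).tsum_sub ((summable_fineFTerm hQ htQ).mul_left b), tsum_mul_left]
  rfl

theorem fineF_shift_t (hQ : ‖Q‖ < 1) (ht : ‖t‖ < 1) (hc : ‖c * Q‖ < 1) :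
    (1 - t) * fineF Q a (c * Q) t = (1 - c) + (c - a * t) * fineF Q a (c * Q) (t * Q) := by
  have htQ : ‖t * Q‖ < 1 := by simpa using norm_mul_pow_lt_one ht hQ.le 1
  set g := fineFTerm Q a (c * Q) t
  set g' := fineFTerm Q a (c * Q) (t * Q)
  have hg : Summable g := summable_fineFTerm hQ ht
  have hg' : Summable g' := summable_fineFTerm hQ htQ
  have hterm (n : ℕ) : g (n + 1) = t * g n - a * t * g' n + c * g' (n + 1) := by
    have h1 := qPoch_ne_zero hc hQ.le n
    have h2 := one_sub_mul_pow_ne_zero hc hQ.le n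
    simp only [g, g', fineFTerm, qPoch_succ, mul_pow, div_eq_mul_inv, mul_inv]
    linear_combination (qPoch a Q n * (1 - a * Q ^ n) * t ^ (n + 1) * (qPoch (c * Q) Q n)⁻¹)
      * mul_inv_cancel₀ h2
  have hsum : ∑' n, g (n + 1) = t * ∑' n, g n - a * t * ∑' n, g' n + c * ∑' n, g' (n + 1) := by
    rw [tsum_congr hterm, ((hg.mul_left t).sub (hg'.mul_left _)).tsum_add
      (((summable_nat_add_iff 1).2 hg').mul_left c), (hg.mul_left t).tsum_sub (hg'.mul_left _),
      tsum_mul_left, tsum_mul_left, tsum_mul_left]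
  have hg0 : g 0 = 1 := fineFTerm_zero
  have hg'0 : g' 0 = 1 := fineFTerm_zero
  rw [fineF, fineF]
  linear_combination hg.tsum_eq_zero_add + hsum - c * hg'.tsum_eq_zero_add + hg0 - c * hg'0

theorem fineF_shift_bt (hQ : ‖Q‖ < 1) (ht : ‖t‖ < 1) (hb : ‖b‖ < 1) :
    (1 - b) * (1 - t) * fineF Q a b t = (1 - b) + t * (b - a) * fineF Q a (b * Q) (t * Q) := by
  linear_combination (1 - t) * fineF_split (a := a) hQ ht hb
    + fineF_shift_t (a := a) (c := b) hQ ht (by simpa using norm_mul_pow_lt_one hb hQ.le 1)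

theorem fineF_shift_abt (hQ : ‖Q‖ < 1) (ht : ‖t‖ < 1) (hc : ‖c * Q‖ < 1) :
    (1 - c * Q) * (1 - t) * fineF Q a (c * Q) t
      = (1 - c * Q) * (1 - a * t)
        + t * Q * (1 - a) * (c - a * t) * fineF Q (a * Q) (c * Q * Q) (t * Q) := by
  have htQ : ‖t * Q‖ < 1 := by simpa using norm_mul_pow_lt_one ht hQ.le 1
  have hcQ : c * Q ≠ 1 := fun h => by simp [h] at hc
  linear_combination (1 - c * Q) * fineF_shift_t (a := a) hQ ht hc
    + (c - a * t) * fineF_shift_ab (a := a) hQ htQ hcQ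

end Fine

section FineBound

variable {Q a b t : ℂ} {s : ℝ}

theorem norm_fineFTerm_le (hQ : ‖Q‖ < 1) (ha : ‖a‖ ≤ 1) (hb : ‖b‖ ≤ (1 - ‖Q‖) / 2)
    (hts : ‖t‖ ≤ s) (n : ℕ) :
    ‖fineFTerm Q a b t n‖ ≤ 2 * Real.exp (1 / (1 - ‖Q‖)) * s ^ n := by
  have hQ' : 0 < 1 - ‖Q‖ := by linarith
  have hnum : ‖qPoch a Q n‖ ≤ Real.exp (1 / (1 - ‖Q‖)) :=
    (norm_qPoch_le hQ n).trans (Real.exp_le_exp.2 (by gcongr))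
  have hden : 1 / 2 ≤ ‖qPoch b Q n‖ := by
    refine le_trans ?_ (one_sub_div_le_norm_qPoch (hb.trans (by linarith [norm_nonneg Q])) hQ n)
    rw [le_sub_comm, div_le_iff₀ hQ']
    linarith
  rw [fineFTerm, norm_div, norm_mul, norm_pow, div_le_iff₀ (by linarith)]
  calc ‖qPoch a Q n‖ * ‖t‖ ^ n ≤ Real.exp (1 / (1 - ‖Q‖)) * s ^ n := by gcongr
    _ ≤ 2 * Real.exp (1 / (1 - ‖Q‖)) * s ^ n * ‖qPoch b Q n‖ := by
        have hpos : 0 ≤ Real.exp (1 / (1 - ‖Q‖)) * s ^ n :=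
          mul_nonneg (Real.exp_pos _).le (pow_nonneg ((norm_nonneg t).trans hts) n)
        nlinarith

theorem norm_fineF_le (hQ : ‖Q‖ < 1) (ha : ‖a‖ ≤ 1) (hb : ‖b‖ ≤ (1 - ‖Q‖) / 2)
    (hts : ‖t‖ ≤ s) (hs : s < 1) :
    ‖fineF Q a b t‖ ≤ 2 * Real.exp (1 / (1 - ‖Q‖)) / (1 - s) := by
  have hgeom := (hasSum_geometric_of_lt_one ((norm_nonneg t).trans hts) hs).mul_left
    (2 * Real.exp (1 / (1 - ‖Q‖)))
  exact tsum_of_norm_bounded hgeom (norm_fineFTerm_le hQ ha hb hts)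

theorem eventually_norm_fineF_le {a b t : ℕ → ℂ} (hQ : ‖Q‖ < 1) (ha : ∀ N, ‖a N‖ ≤ 1)
    (hb : Tendsto b atTop (𝓝 0)) (ht : ∀ N, ‖t N‖ ≤ s) (hs : s < 1) :
    ∀ᶠ N in atTop, ‖fineF Q (a N) (b N) (t N)‖ ≤ 2 * Real.exp (1 / (1 - ‖Q‖)) / (1 - s) := by
  filter_upwards [hb.norm.eventually_le_const (u := (1 - ‖Q‖) / 2) (by rw [norm_zero]; linarith)]
    with N hN
  exact norm_fineF_le hQ (ha N) hN (ht N) hs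

end FineBound

section W1

variable {q : ℂ}

theorem norm_neg_pow_lt_one (hq : ‖q‖ < 1) {m : ℕ} (hm : m ≠ 0) : ‖-q ^ m‖ < 1 := by
  simpa using pow_lt_one₀ (norm_nonneg q) hq hm

theorem one_add_pow_ne_zero (hq : ‖q‖ < 1) {m : ℕ} (hm : m ≠ 0) : 1 + q ^ m ≠ 0 := fun h => by
  have h1 : ‖q‖ ^ m = 1 := by simpa using congrArg norm (eq_neg_of_add_eq_zero_right h)
  exact (pow_lt_one₀ (norm_nonneg q) hq hm).ne h1

theorem tendsto_pow_mul_add (hq : ‖q‖ < 1) {m : ℕ} (hm : m ≠ 0) (r : ℕ) :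
    Tendsto (fun k => q ^ (m * k + r)) atTop (𝓝 0) :=
  (tendsto_pow_atTop_nhds_zero_of_norm_lt_one hq).comp
    (tendsto_atTop_mono (fun k => show k ≤ m * k + r by nlinarith [Nat.pos_of_ne_zero hm])
      tendsto_id)

theorem eventually_norm_fineF_neg_pow_le (hq : ‖q‖ < 1) {a : ℕ → ℂ} (ha : ∀ N, ‖a N‖ ≤ 1) :
    ∀ᶠ N in atTop, ‖fineF (q ^ 2) (a N) (-q ^ (2 * N + 2)) (-q ^ (2 * N + 1))‖
      ≤ 2 * Real.exp (1 / (1 - ‖q ^ 2‖)) / (1 - ‖q‖) :=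
  eventually_norm_fineF_le (by simpa using norm_neg_pow_lt_one hq two_ne_zero) ha
    (by simpa using (tendsto_pow_mul_add hq two_ne_zero 2).neg)
    (fun N => by simpa using pow_le_of_le_one (norm_nonneg q) hq.le (by omega : 2 * N + 1 ≠ 0))
    hq

noncomputable def fineV (q : ℂ) (k : ℕ) : ℂ :=
  fineF (q ^ 2) q (-q ^ (2 * k + 2)) (-q ^ (2 * k + 1))

noncomputable def fineW (q : ℂ) (k : ℕ) : ℂ :=
  fineF (q ^ 2) (q ^ (2 * k + 1)) (-q ^ (2 * k + 2)) (-q ^ (2 * k + 1))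

theorem fineV_zero_eq_fineW_zero : fineV q 0 = fineW q 0 := by simp [fineV, fineW]

theorem fineV_recurrence (hq : ‖q‖ < 1) (k : ℕ) :
    fineV q k = 1 / (1 + q ^ (2 * k + 1))
      + q ^ (2 * k + 2) / (1 + q ^ (2 * k + 2)) * fineV q (k + 1) := by
  have h := fineF_shift_bt (Q := q ^ 2) (a := q) (by simpa using norm_neg_pow_lt_one hq two_ne_zero)
    (norm_neg_pow_lt_one hq (m := 2 * k + 1) (by omega))
    (norm_neg_pow_lt_one hq (m := 2 * k + 2) (by omega))
  rw [show -q ^ (2 * k + 2) * q ^ 2 = -q ^ (2 * (k + 1) + 2) by ring,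
    show -q ^ (2 * k + 1) * q ^ 2 = -q ^ (2 * (k + 1) + 1) by ring] at h
  have h1 := one_add_pow_ne_zero hq (m := 2 * k + 1) (by omega)
  have h2 := one_add_pow_ne_zero hq (m := 2 * k + 2) (by omega)
  unfold fineV
  field_simp
  linear_combination h

theorem fineW_recurrence (hq : ‖q‖ < 1) (k : ℕ) :
    fineW q k = (1 + q ^ (4 * k + 2)) / (1 + q ^ (2 * k + 1))
      + q ^ (4 * k + 3) * (1 - q ^ (2 * k + 1)) * (1 - q ^ (2 * k + 2))
        / ((1 + q ^ (2 * k + 1)) * (1 + q ^ (2 * k + 2))) * fineW q (k + 1) := by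
  have h := fineF_shift_abt (Q := q ^ 2) (a := q ^ (2 * k + 1)) (c := -q ^ (2 * k))
    (by simpa using norm_neg_pow_lt_one hq two_ne_zero)
    (norm_neg_pow_lt_one hq (m := 2 * k + 1) (by omega))
    (by simpa [← pow_add] using norm_neg_pow_lt_one hq (m := 2 * k + 2) (by omega))
  rw [show -q ^ (2 * k) * q ^ 2 * q ^ 2 = -q ^ (2 * (k + 1) + 2) by ring,
    show -q ^ (2 * k) * q ^ 2 = -q ^ (2 * k + 2) by ring,
    show q ^ (2 * k + 1) * q ^ 2 = q ^ (2 * (k + 1) + 1) by ring,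
    show -q ^ (2 * k + 1) * q ^ 2 = -q ^ (2 * (k + 1) + 1) by ring] at h
  have h1 := one_add_pow_ne_zero hq (m := 2 * k + 1) (by omega)
  have h2 := one_add_pow_ne_zero hq (m := 2 * k + 2) (by omega)
  unfold fineW
  field_simp
  linear_combination h

theorem prod_pow_div_one_add_pow (q : ℂ) (k : ℕ) :
    ∏ j ∈ range k, q ^ (2 * j + 2) / (1 + q ^ (2 * j + 2))
      = q ^ ((k + 1) * k) / qPoch (-q ^ 2) (q ^ 2) k := by
  induction k with
  | zero => simp [qPoch_zero]
  | succ k ih =>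
    rw [prod_range_succ, ih, qPoch_succ, div_mul_div_comm]
    ring_nf

theorem hasSum_fineV (hq : ‖q‖ < 1) :
    HasSum
      (fun n : ℕ => q ^ ((n + 1) * n) / ((1 + q ^ (2 * (n + 1) - 1)) * qPoch (-q ^ 2) (q ^ 2) n))
      (fineV q 0) := by
  have hy : Tendsto (fun k => q ^ (2 * k + 2) / (1 + q ^ (2 * k + 2))) atTop (𝓝 0) := by
    have h := tendsto_pow_mul_add hq two_ne_zero 2
    simpa [Pi.div_def] using h.div (tendsto_const_nhds.add h) (by simp)
  refine (hasSum_prod_mul_of_recurrence (fineV_recurrence hq) hy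
    (eventually_norm_fineF_neg_pow_le hq fun _ => hq.le)).congr_fun fun n => ?_
  rw [prod_pow_div_one_add_pow, show 2 * (n + 1) - 1 = 2 * n + 1 by omega, div_mul_div_comm,
    mul_one, mul_comm (qPoch _ _ _)]

noncomputable def w1Term (q : ℂ) (n : ℕ) : ℂ :=
  (-1 : ℂ) ^ n * qPoch q q n * q ^ (n * (n + 1) / 2) / qPoch (-q) q n

theorem w1Term_succ (q : ℂ) (n : ℕ) :
    w1Term q (n + 1) = w1Term q n * (-(1 - q ^ (n + 1)) * q ^ (n + 1) / (1 + q ^ (n + 1))) := by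
  have htri : (n + 1) * (n + 1 + 1) / 2 = n * (n + 1) / 2 + (n + 1) := by
    rw [show (n + 1) * (n + 1 + 1) = n * (n + 1) + 2 * (n + 1) by ring,
      Nat.add_mul_div_left _ _ two_pos]
  rw [w1Term, w1Term, qPoch_succ, qPoch_succ, htri, div_mul_div_comm]
  ring

theorem summable_w1Term (hq : ‖q‖ < 1) : Summable (w1Term q) := by
  have h := tendsto_pow_mul_add hq one_ne_zero 1
  simp only [one_mul] at h
  have hr : Tendsto (fun n => -(1 - q ^ (n + 1)) * q ^ (n + 1) / (1 + q ^ (n + 1))) atTop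
      (𝓝 0) := by
    simpa [Pi.div_def] using (((h.const_sub 1).neg).mul h).div (h.const_add 1) (by simp)
  exact .of_norm (summable_norm_of_succ_eq_mul (w1Term_succ q) hr (by simp))

theorem w1Term_two_mul (q : ℂ) (k : ℕ) :
    w1Term q (2 * k) = ∏ j ∈ range k, q ^ (4 * j + 3) * (1 - q ^ (2 * j + 1))
      * (1 - q ^ (2 * j + 2)) / ((1 + q ^ (2 * j + 1)) * (1 + q ^ (2 * j + 2))) := by
  induction k with
  | zero => simp [w1Term, qPoch_zero]
  | succ k ih =>
    rw [show 2 * (k + 1) = 2 * k + 1 + 1 by ring, w1Term_succ, w1Term_succ, ih, prod_range_succ,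
      mul_assoc]
    congr 1
    simp only [div_eq_mul_inv, mul_inv]
    ring

theorem w1Term_two_mul_add_w1Term (hq : ‖q‖ < 1) (k : ℕ) :
    w1Term q (2 * k) + w1Term q (2 * k + 1)
      = w1Term q (2 * k) * ((1 + q ^ (4 * k + 2)) / (1 + q ^ (2 * k + 1))) := by
  have h := one_add_pow_ne_zero hq (m := 2 * k + 1) (by omega)
  rw [w1Term_succ]
  field_simp
  ring

theorem hasSum_fineW (hq : ‖q‖ < 1) :
    HasSum (fun k => w1Term q (2 * k) + w1Term q (2 * k + 1)) (fineW q 0) := by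
  have hy : Tendsto (fun k => q ^ (4 * k + 3) * (1 - q ^ (2 * k + 1)) * (1 - q ^ (2 * k + 2))
      / ((1 + q ^ (2 * k + 1)) * (1 + q ^ (2 * k + 2)))) atTop (𝓝 0) := by
    have h1 := tendsto_pow_mul_add hq two_ne_zero 1
    have h2 := tendsto_pow_mul_add hq two_ne_zero 2
    have h4 := tendsto_pow_mul_add hq four_ne_zero 3
    simpa [Pi.div_def] using ((h4.mul (h1.const_sub 1)).mul (h2.const_sub 1)).div
      ((h1.const_add 1).mul (h2.const_add 1)) (by simp)
  refine (hasSum_prod_mul_of_recurrence (fineW_recurrence hq) hy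
    (eventually_norm_fineF_neg_pow_le hq fun N => ?_)).congr_fun fun k => ?_
  · simpa using pow_le_one₀ (norm_nonneg q) hq.le
  · rw [w1Term_two_mul_add_w1Term hq, w1Term_two_mul]

end W1

/-- For |q|<1,
`∑_{n≥1} q^{n(n-1)}/((1+q^{2n-1})(-q²;q²)_{n-1})
  = W₁(q) = ∑_{n≥0} (-1)^n (q;q)_n q^{n(n+1)/2}/(-q;q)_n`. -/
theorem stmt_14 (q : ℂ) (hq : ‖q‖ < 1) :
    ∑' n : ℕ, q ^ ((n + 1) * n) / ((1 + q ^ (2 * (n + 1) - 1)) * qPoch (-q ^ 2) (q ^ 2) n)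
      = ∑' n : ℕ, (-1 : ℂ) ^ n * qPoch q q n * q ^ (n * (n + 1) / 2) / qPoch (-q) q n := by
  have hW := summable_w1Term hq
  have heven : Summable fun k => w1Term q (2 * k) :=
    hW.comp_injective (mul_right_injective₀ two_ne_zero)
  have hodd : Summable fun k => w1Term q (2 * k + 1) :=
    hW.comp_injective ((add_left_injective 1).comp (mul_right_injective₀ two_ne_zero))
  calc _ = fineV q 0 := (hasSum_fineV hq).tsum_eq
    _ = fineW q 0 := fineV_zero_eq_fineW_zero
    _ = ∑' k, w1Term q (2 * k) + ∑' k, w1Term q (2 * k + 1) :=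
        (hasSum_fineW hq).unique (heven.hasSum.add hodd.hasSum)
    _ = ∑' n, w1Term q n := tsum_even_add_odd heven hodd
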